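/- arXiv:1508.06239 — 2 statements merged into one kernel-verified Lean document; each statement's English description precedes it below -/
import Mathlib

section
/- With notation as above (f_{i,0} = y^i, f_{i,r+1} = Δ_{x_r,x_{r+1}} f_{i,r}, x_0 = y), and working with finitely many variables x_1,…,x_R, the telescoping sum ∑_{r=0}^{R} f_{i,r} equals (1-q)^{-1}·h_i[(1-q)(y + x_1 + ⋯ + x_R)]. -/
/-!
Write `Z_r = y + x_1 + ⋯ + x_r` and `H_r = h_i[(1-q) Z_r]`. We show
`f_{i,r} = (H_r - H_{r-1}) / (1-q)` (with `H_{-1} = 0`), after which the sum telescopes.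
Adjoining a variable `x` to `Z` multiplies `∑ₙ h_n[(1-q)Z] tⁿ` by `(1 - q x t) / (1 - x t)`, i.e.
`h_{n+1}[(1-q)(Z+x)] = x h_n[(1-q)(Z+x)] + h_{n+1}[(1-q)Z] - q x h_n[(1-q)Z]`.
Applying this recurrence to the alphabets `Z_{r-1}`, `Z_{r-1} + x_r`, `Z_{r-1} + x_{r+1}` and
`Z_{r+1}`, an induction on the degree shows that `Δ_{x_r x_{r+1}}` carries `H_r - H_{r-1}` to
`H_{r+1} - H_r`; the defining relation of `Δ` determines it since `x_{r+1} - x_r` is not a zero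
divisor.
-/

noncomputable section
open MvPolynomial

abbrev K : Type := RatFunc ℚ

noncomputable def q : K := RatFunc.X

/-- elementary symmetric polynomial of the variables in `S` -/
noncomputable def myE (S : Finset ℕ) (n : ℕ) : MvPolynomial ℕ K :=
  ∑ T ∈ S.powersetCard n, ∏ i ∈ T, X i

/-- complete homogeneous symmetric polynomial of the variables in `S` -/
noncomputable def myH (S : Finset ℕ) (n : ℕ) : MvPolynomial ℕ K :=
  ∑ m ∈ S.sym n, (Multiset.map X m.1).prod

/-- the plethystic evaluation h_i[(1-q)·Z] where Z is the sum of the variables in `S` -/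
noncomputable def hq (S : Finset ℕ) (i : ℕ) : MvPolynomial ℕ K :=
  ∑ b ∈ Finset.range (i + 1), ((-q) ^ b) • (myE S b * myH S (i - b))

open Finset

lemma Finset.sym_insert_succ {α : Type*} [DecidableEq α] {j : α} {S : Finset α} (hj : j ∉ S)
    (n : ℕ) :
    (insert j S).sym (n + 1) = S.sym (n + 1) ∪ ((insert j S).sym n).image (Sym.cons j) := by
  ext m
  simp only [mem_sym_iff, mem_union, mem_image]
  constructor
  · intro h
    by_cases hjm : j ∈ m
    · obtain ⟨t, rfl⟩ := Sym.exists_cons_of_mem hjm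
      exact Or.inr ⟨t, fun a ha => h a (Sym.mem_cons_of_mem ha), rfl⟩
    · exact Or.inl fun a ha => (mem_insert.1 (h a ha)).resolve_left (by rintro rfl; exact hjm ha)
  · rintro (h | ⟨t, ht, rfl⟩) a ha
    · exact mem_insert_of_mem (h a ha)
    · rcases Sym.mem_cons.1 ha with rfl | hat
      · exact mem_insert_self _ _
      · exact ht a hat

section WeightedConvolution

variable {R : Type*} [CommRing R]

def weightedConv (c : R) (e h : ℕ → R) (n : ℕ) : R :=
  ∑ b ∈ range (n + 1), c ^ b * (e b * h (n - b))

lemma weightedConv_succ_of_right_recurrence {c x : R} {e h h' : ℕ → R} (h0 : h' 0 = h 0)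
    (hs : ∀ m, h' (m + 1) = x * h' m + h (m + 1)) (n : ℕ) :
    weightedConv c e h' (n + 1) = x * weightedConv c e h' n + weightedConv c e h (n + 1) := by
  simp only [weightedConv]
  rw [sum_range_succ, sum_range_succ _ (n + 1), Nat.sub_self, h0, mul_sum, ← add_assoc,
    ← sum_add_distrib]
  congr 1
  refine sum_congr rfl fun b hb => ?_
  rw [Nat.sub_add_comm (Nat.lt_succ_iff.1 (mem_range.1 hb)), hs]
  ring

lemma weightedConv_succ_of_left_recurrence {c x : R} {e e' h : ℕ → R} (h0 : e' 0 = e 0)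
    (hs : ∀ b, e' (b + 1) = e (b + 1) + x * e b) (n : ℕ) :
    weightedConv c e' h (n + 1) = weightedConv c e h (n + 1) + c * x * weightedConv c e h n := by
  simp only [weightedConv]
  rw [sum_range_succ' _ (n + 1), sum_range_succ' _ (n + 1), h0, mul_sum, add_right_comm,
    ← sum_add_distrib]
  congr 1
  refine sum_congr rfl fun b _ => ?_
  rw [hs, Nat.add_sub_add_right]
  ring

end WeightedConvolution

lemma hq_eq_weightedConv (S : Finset ℕ) (n : ℕ) :
    hq S n = weightedConv (C (-q)) (myE S) (myH S) n := by
  simp [hq, weightedConv, smul_eq_C_mul]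

lemma myE_zero (S : Finset ℕ) : myE S 0 = 1 := by
  simp [myE]

lemma myH_zero (S : Finset ℕ) : myH S 0 = 1 := by
  rw [myH, sym_zero, sum_singleton]
  rfl

lemma hq_zero (S : Finset ℕ) : hq S 0 = 1 := by
  simp [hq, myE_zero, myH_zero]

lemma hq_empty_succ (n : ℕ) : hq ∅ (n + 1) = 0 := by
  refine sum_eq_zero fun b _ => ?_
  rcases b with _ | b
  · simp [myH]
  · rw [myE, powersetCard_eq_empty.2 (by simp), sum_empty, zero_mul, smul_zero]

lemma myE_insert {j : ℕ} {S : Finset ℕ} (hj : j ∉ S) (n : ℕ) :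
    myE (insert j S) (n + 1) = myE S (n + 1) + X j * myE S n := by
  have hjT : ∀ T ∈ S.powersetCard n, j ∉ T := fun T hT hj' =>
    hj ((mem_powersetCard.1 hT).1 hj')
  have hinj : Set.InjOn (insert j) (S.powersetCard n : Set (Finset ℕ)) := fun T₁ h₁ T₂ h₂ h => by
    rw [← erase_insert (hjT T₁ h₁), ← erase_insert (hjT T₂ h₂), h]
  have hdisj : Disjoint (S.powersetCard (n + 1)) ((S.powersetCard n).image (insert j)) :=
    disjoint_left.2 fun T hT hT' => by
      obtain ⟨T', -, rfl⟩ := mem_image.1 hT'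
      exact hj ((mem_powersetCard.1 hT).1 (mem_insert_self j T'))
  rw [myE, powersetCard_succ_insert hj, sum_union hdisj, sum_image hinj, myE, myE, mul_sum]
  exact congrArg _ (sum_congr rfl fun T hT => prod_insert (hjT T hT))

lemma myH_insert {j : ℕ} {S : Finset ℕ} (hj : j ∉ S) (n : ℕ) :
    myH (insert j S) (n + 1) = X j * myH (insert j S) n + myH S (n + 1) := by
  have hdisj : Disjoint (S.sym (n + 1)) (((insert j S).sym n).image (Sym.cons j)) :=
    disjoint_left.2 fun m hm hm' => by
      obtain ⟨t, -, rfl⟩ := mem_image.1 hm'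
      exact hj (mem_sym_iff.1 hm j (Sym.mem_cons_self j t))
  rw [myH, Finset.sym_insert_succ hj, sum_union hdisj,
    sum_image fun t₁ _ t₂ _ h => (Sym.cons_inj_right j t₁ t₂).1 h, add_comm, myH, myH, mul_sum]
  congr 1
  refine sum_congr rfl fun t _ => ?_
  simp [Sym.coe_cons]

lemma hq_insert {j : ℕ} {S : Finset ℕ} (hj : j ∉ S) (n : ℕ) :
    hq (insert j S) (n + 1) = X j * hq (insert j S) n + hq S (n + 1) - C q * X j * hq S n := by
  simp only [hq_eq_weightedConv]
  rw [weightedConv_succ_of_right_recurrence (by rw [myH_zero, myH_zero]) (myH_insert hj),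
    weightedConv_succ_of_left_recurrence (by rw [myE_zero, myE_zero]) (myE_insert hj), map_neg]
  ring

lemma hq_singleton (j n : ℕ) : hq {j} (n + 1) = C (1 - q) * X j ^ (n + 1) := by
  induction n with
  | zero =>
    rw [← insert_empty, hq_insert (notMem_empty j), hq_zero, hq_zero, hq_empty_succ, map_sub,
      map_one]
    ring
  | succ n ih =>
    rw [← insert_empty, hq_insert (notMem_empty j), insert_empty, ih, hq_empty_succ,
      hq_empty_succ]
    ring

lemma rename_myE (σ : ℕ ≃ ℕ) (S : Finset ℕ) (n : ℕ) :
    rename σ (myE S n) = myE (S.map σ.toEmbedding) n := by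
  simp [myE, powersetCard_map]

lemma rename_myH (σ : ℕ ≃ ℕ) (S : Finset ℕ) (n : ℕ) :
    rename σ (myH S n) = myH (S.map σ.toEmbedding) n := by
  simp only [myH, map_sum, map_multiset_prod, Multiset.map_map]
  refine sum_nbij' (Sym.map σ) (Sym.map σ.symm) ?_ ?_ ?_ ?_ ?_ <;>
    simp [mem_sym_iff, Sym.map_map, Function.comp_def]

lemma rename_hq (σ : ℕ ≃ ℕ) (S : Finset ℕ) (n : ℕ) :
    rename σ (hq S n) = hq (S.map σ.toEmbedding) n := by
  simp [hq_eq_weightedConv, weightedConv, rename_myE, rename_myH]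

lemma map_swap_range (r : ℕ) :
    (range r).map (Equiv.swap r (r + 1)).toEmbedding = range r := by
  ext m
  rw [mem_map_equiv, Equiv.symm_swap, Equiv.swap_apply_def]
  split_ifs <;> simp <;> omega

lemma map_swap_range_succ (r : ℕ) :
    (range (r + 1)).map (Equiv.swap r (r + 1)).toEmbedding = insert (r + 1) (range r) := by
  rw [range_add_one, map_insert, map_swap_range]
  simp

-- As `swap u v` maps `insert u S` to `insert v S`, this says that `Δ_{uv}` carries
-- `hq (insert u S) - hq S` to `hq (insert v (insert u S)) - hq (insert u S)`.
lemma hq_demazure_relation {u v : ℕ} {S : Finset ℕ} (hu : u ∉ S) (hv : v ∉ S) (huv : u ≠ v)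
    (n : ℕ) :
    (X v - X u) * (hq (insert v (insert u S)) n - hq (insert u S) n) =
      C (q - 1) * X v * (hq (insert u S) n - hq S n) +
        (X v - C q * X u) * (hq (insert v S) n - hq S n) := by
  rw [map_sub, map_one]
  induction n with
  | zero => simp [hq_zero]
  | succ n ih =>
    rw [hq_insert (by simp [hv, huv.symm] : v ∉ insert u S), hq_insert hu, hq_insert hv]
    linear_combination X v * ih

lemma demazure_hq_sub_range (D : MvPolynomial ℕ K → MvPolynomial ℕ K) (c : K) (r n : ℕ)
    (hD : ∀ P, (X (r + 1) - X r) * D P =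
      C (q - 1) * X (r + 1) * P + (X (r + 1) - C q * X r) * rename (Equiv.swap r (r + 1)) P) :
    D (C c * (hq (range (r + 1)) n - hq (range r) n)) =
      C c * (hq (range (r + 1 + 1)) n - hq (range (r + 1)) n) := by
  have hne : (X (r + 1) - X r : MvPolynomial ℕ K) ≠ 0 :=
    sub_ne_zero.2 fun h => by simpa using X_injective h
  refine mul_left_cancel₀ hne ?_
  have hswap : rename (Equiv.swap r (r + 1)) (C c * (hq (range (r + 1)) n - hq (range r) n)) =
      C c * (hq (insert (r + 1) (range r)) n - hq (range r) n) := by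
    rw [map_mul, rename_C, map_sub, rename_hq, rename_hq, map_swap_range, map_swap_range_succ]
  rw [hD, hswap]
  have h := hq_demazure_relation (notMem_range_self (n := r)) (by simp : r + 1 ∉ range r)
    (Nat.succ_ne_self r).symm n
  rw [← range_add_one, ← range_add_one] at h
  linear_combination -C c * h

lemma one_sub_q_ne_zero : (1 : K) - q ≠ 0 :=
  sub_ne_zero.2 fun h => by simpa [q] using congrArg RatFunc.intDegree h

theorem f_ir_telescoping_sum (i : ℕ) (hi : 1 ≤ i)
    (D : ℕ → MvPolynomial ℕ K → MvPolynomial ℕ K)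
    (hD : ∀ (r : ℕ) (P : MvPolynomial ℕ K),
      (X (r + 1) - X r) * D r P =
        C (q - 1) * X (r + 1) * P + (X (r + 1) - C q * X r) * rename (Equiv.swap r (r + 1)) P)
    (f : ℕ → MvPolynomial ℕ K)
    (hf0 : f 0 = X 0 ^ i)
    (hfs : ∀ r : ℕ, f (r + 1) = D r (f r)) :
    ∀ R : ℕ, ∑ r ∈ Finset.range (R + 1), f r =
      C (1 - q)⁻¹ * hq (Finset.range (R + 1)) i := by
  obtain ⟨n, rfl⟩ : ∃ n, i = n + 1 := ⟨i - 1, by omega⟩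
  have hf : ∀ r, f r = C (1 - q)⁻¹ * (hq (range (r + 1)) (n + 1) - hq (range r) (n + 1)) := by
    intro r
    induction r with
    | zero =>
      rw [hf0, range_one, range_zero, hq_singleton, hq_empty_succ, sub_zero, ← mul_assoc,
        ← map_mul, inv_mul_cancel₀ one_sub_q_ne_zero, map_one, one_mul]
    | succ r ih => rw [hfs, ih, demazure_hq_sub_range (D r) _ r _ (hD r)]
  intro R
  rw [sum_congr rfl fun r _ => hf r, ← mul_sum, sum_range_sub (fun m => hq (range m) (n + 1)),
    range_zero, hq_empty_succ, sub_zero]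

end
end

section
/- For any Dyck path π with corner set c(π), χ(π, 0) = (1−q)^{-|c(π)|} · ∑_{S ⊆ c(π)} (−1)^{|S|} · χ(π_S), where π_S is the Dyck path obtained from π by flipping the corners in S, and χ(π,0) is the weighted characteristic function with all corner weights equal to 0. -/
/-!
STATEMENT 12: χ(π, 0) = (1−q)^{-|c(π)|} · ∑_{S ⊆ c(π)} (−1)^{|S|} χ(π_S), where π_S
is the path π with the corners in S flipped, and χ(π,0) is the weighted characteristic
function with all corner weights 0.
-/

noncomputable section
open MvPolynomial

/-- A Dyck word: `true` = North step, `false` = East step; equal numbers of each,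
and every prefix has at least as many North as East steps (path stays above the diagonal). -/
def IsDyckWord (s : List Bool) : Prop :=
  s.count true = s.count false ∧ ∀ k : ℕ, ((s.take k).count false) ≤ ((s.take k).count true)

/-- the (sorted) list of positions of the North steps of `s` -/
def Npos (s : List Bool) : List ℕ :=
  (List.range s.length).filter (fun p => s.getD p false = true)

/-- the (sorted) list of positions of the East steps of `s` -/
def Epos (s : List Bool) : List ℕ :=
  (List.range s.length).filter (fun p => s.getD p false = false)

/-- `Area(π)`: the pairs `(i,j)` (0-indexed; cell in column i+1, row j+1) with `i < j`
such that the cell lies under the path, i.e. the (j+1)-st North step occurs before the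
(i+1)-st East step. -/
def area (s : List Bool) (n : ℕ) : Finset (Fin n × Fin n) :=
  Finset.univ.filter (fun p => (p.1 : ℕ) < (p.2 : ℕ) ∧
    (Npos s).getD p.2 0 < (Epos s).getD p.1 0)

/-- `c(π)`: corners, i.e. cells `(i,j)` (0-indexed) above the path whose southern and
eastern neighbours are below the path. -/
def corners (s : List Bool) (n : ℕ) : Finset (Fin n × Fin n) :=
  Finset.univ.filter (fun p => ¬ ((Npos s).getD p.2 0 < (Epos s).getD p.1 0) ∧
    (Npos s).getD ((p.2 : ℕ) - 1) 0 < (Epos s).getD p.1 0 ∧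
    (Npos s).getD p.2 0 < (Epos s).getD ((p.1 : ℕ) + 1) 0)

/-- The characteristic function `χ(π) = ∑_{w ∈ ℤ_{>0}^n} q^{inv(π,w)} x_w`
as a formal power series in the variables x_i, i ∈ ℤ_{>0}; the coefficient of
a monomial d is the (finite) sum of q^{inv(π,w)} over all w whose monomial x_w is d. -/
noncomputable def chi {n : ℕ} (A : Finset (Fin n × Fin n)) : MvPowerSeries ℕ+ K :=
  fun d : ℕ+ →₀ ℕ =>
    ∑ w : Fin n → {x // x ∈ d.support},
      if (∑ i : Fin n, Finsupp.single ((w i : ℕ+)) 1) = d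
      then q ^ ((A.filter (fun p => (w p.1 : ℕ+) > (w p.2 : ℕ+))).card) else 0

/-- The weighted characteristic function `χ(π, wt)`, where `A = Area(π)`,
`Cn = c(π)` and `wt` is the weight function on corners. -/
noncomputable def chiwt {n : ℕ} (A Cn : Finset (Fin n × Fin n))
    (wt : Fin n × Fin n → K) : MvPowerSeries ℕ+ K :=
  fun d : ℕ+ →₀ ℕ =>
    ∑ w : Fin n → {x // x ∈ d.support},
      if (∑ i : Fin n, Finsupp.single ((w i : ℕ+)) 1) = d
      then q ^ ((A.filter (fun p => (w p.1 : ℕ+) > (w p.2 : ℕ+))).card) *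
        ∏ p ∈ Cn.filter (fun p => (w p.1 : ℕ+) ≤ (w p.2 : ℕ+)), wt p
      else 0

/-- flip the corners of π lying in the set S (swap the East/North step pair at each
corresponding valley; distinct corners involve disjoint pairs of positions). -/
noncomputable def flipSet {n : ℕ} (s : List Bool) (S : Finset (Fin n × Fin n)) :
    List Bool :=
  S.toList.foldl
    (fun t p => (t.set ((Epos s).getD (p.1 : ℕ) 0) true).set
      ((Epos s).getD (p.1 : ℕ) 0 + 1) false) s


/-!
Flipping a corner `(i, j)` exchanges the East step `E_i` and the North step `N_j = E_i + 1` of the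
valley below it. The valleys of distinct corners are disjoint, so flipping a set `S` of corners
permutes the letters of the word by a product of disjoint adjacent transpositions; this moves
`N_j` down by one exactly when row `j` carries a flipped corner and `E_i` up by one exactly when
column `i` does, and the only comparison `N_j < E_i` that changes is the one at a flipped corner.
Hence `Area(π_S)` is the disjoint union `Area(π) ∪ S`.

For a fixed colouring `w`, the summand of `χ(π_S)` is therefore `q^{inv_A(w)} q^{#(S ∩ P)}`, where
`P` is the set of corners inverted by `w`, and the alternating sum over `S ⊆ c(π)` factors as
`∏_{c ∈ c(π)} (1 - q^{[c ∈ P]})`: this is `(1 - q)^{|c(π)|}` if `w` inverts every corner and `0`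
otherwise, which is the weight `∏_{c ∉ P} 0` of `w` in `χ(π, 0)`.
-/

namespace List

variable {l : List ℕ} {i j k m x : ℕ}

theorem getD_mem_of_lt {α : Type*} {l : List α} (d : α) (h : i < l.length) :
    l.getD i d ∈ l := by
  rw [getD_eq_getElem _ _ h]; exact getElem_mem h

theorem SortedLT.getD_lt_getD_iff (hl : l.SortedLT) (hi : i < l.length) (hj : j < l.length) :
    l.getD i 0 < l.getD j 0 ↔ i < j := by
  rw [getD_eq_getElem _ _ hi, getD_eq_getElem _ _ hj]; exact hl.getElem_lt_getElem_iff

theorem SortedLT.getD_inj (hl : l.SortedLT) (hi : i < l.length) (hj : j < l.length) :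
    l.getD i 0 = l.getD j 0 ↔ i = j := by
  rw [getD_eq_getElem _ _ hi, getD_eq_getElem _ _ hj]; exact hl.nodup.getElem_inj_iff

theorem SortedLT.notMem_of_getD_lt_of_lt_getD (hl : l.SortedLT) (hk : k + 1 < l.length)
    (h₁ : l.getD k 0 < x) (h₂ : x < l.getD (k + 1) 0) : x ∉ l := by
  intro hx
  obtain ⟨i, hi, rfl⟩ := getElem_of_mem hx
  rw [← getD_eq_getElem _ 0 hi, hl.getD_lt_getD_iff (by omega) hi] at h₁
  rw [← getD_eq_getElem _ 0 hi, hl.getD_lt_getD_iff hi hk] at h₂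
  omega

theorem SortedLT.lt_length_filter_lt_iff (hl : l.SortedLT) (hk : k < l.length) :
    k < (l.filter (· < m)).length ↔ l.getD k 0 < m := by
  rw [sortedLT_iff_pairwise] at hl
  induction l generalizing k with
  | nil => simp at hk
  | cons a t ih =>
    obtain ⟨ha, ht⟩ := pairwise_cons.1 hl
    by_cases ham : a < m
    · cases k with
      | zero => simp [ham]
      | succ k => simp [ham, ih ht (by simpa using hk)]
    · have hge : ∀ y ∈ a :: t, m ≤ y := by
        simp only [mem_cons, forall_eq_or_imp]
        exact ⟨by omega, fun y hy => by have := ha y hy; omega⟩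
      rw [filter_eq_nil_iff.2 fun y hy => by simpa using hge y hy]
      simpa using hge _ (getD_mem_of_lt 0 hk)

end List

def positions (s : List Bool) (b : Bool) : List ℕ :=
  (List.range s.length).filter (fun p => s.getD p false = b)

section Positions

variable {s t : List Bool} {b : Bool} {x : ℕ}

theorem Npos_eq_positions : Npos s = positions s true := rfl

theorem Epos_eq_positions : Epos s = positions s false := rfl

theorem mem_positions : x ∈ positions s b ↔ x < s.length ∧ s.getD x false = b := by
  simp [positions]

theorem sortedLT_positions : (positions s b).SortedLT :=
  ((List.sortedLT_range _).pairwise.filter _).sortedLT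

theorem length_positions : (positions s b).length = s.count b := by
  have hs : (List.range s.length).map (s.getD · false) = s :=
    List.ext_getElem (by simp) fun i _ h => by simp [h]
  conv_rhs => rw [← hs]
  rw [List.count, List.countP_map, List.countP_eq_length_filter, positions]
  congr 2

theorem positions_take (m : ℕ) : positions (s.take m) b = (positions s b).filter (· < m) := by
  refine sortedLT_positions.eq_of_mem_iff
    ((sortedLT_positions.pairwise.filter _).sortedLT) fun x => ?_
  simp only [mem_positions, List.mem_filter, List.length_take, decide_eq_true_eq,
    List.getD_eq_getElem?_getD, List.getElem?_take]
  constructor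
  · rintro ⟨hx, h⟩
    have hxm : x < m := by omega
    rw [if_pos hxm] at h
    exact ⟨⟨by omega, h⟩, hxm⟩
  · rintro ⟨⟨hx, h⟩, hxm⟩
    rw [if_pos hxm]
    exact ⟨by omega, h⟩

theorem positions_eq_map_of_getD_eq (σ : ℕ → ℕ) (hσ : Function.Involutive σ)
    (hlen : ∀ p, σ p < s.length ↔ p < t.length)
    (hget : ∀ p, t.getD p false = s.getD (σ p) false)
    (hmono : ∀ x ∈ positions s b, ∀ y ∈ positions s b, x < y → σ x < σ y) :
    positions t b = (positions s b).map σ := by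
  refine sortedLT_positions.eq_of_mem_iff ?_ fun x => ?_
  · exact (List.pairwise_map.2
      (sortedLT_positions.pairwise.imp_of_mem fun hx hy => hmono _ hx _ hy)).sortedLT
  · rw [List.mem_map, mem_positions, ← hlen, hget, ← mem_positions]
    exact ⟨fun h => ⟨σ x, h, hσ x⟩, fun ⟨y, hy, hyx⟩ => hyx ▸ (hσ y).symm ▸ hy⟩

end Positions

section Dyck

variable {s : List Bool} {n : ℕ}

theorem sortedLT_Npos : (Npos s).SortedLT := sortedLT_positions

theorem sortedLT_Epos : (Epos s).SortedLT := sortedLT_positions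

theorem length_Npos (hn : s.count true = n) : (Npos s).length = n := by
  rw [Npos_eq_positions, length_positions, hn]

theorem IsDyckWord.length_Epos (hs : IsDyckWord s) (hn : s.count true = n) :
    (Epos s).length = n := by
  rw [Epos_eq_positions, length_positions, ← hs.1, hn]

theorem mem_Npos {x : ℕ} : x ∈ Npos s ↔ x < s.length ∧ s.getD x false = true :=
  mem_positions

theorem mem_Epos {x : ℕ} : x ∈ Epos s ↔ x < s.length ∧ s.getD x false = false :=
  mem_positions

theorem ne_of_mem_Npos_of_mem_Epos {x y : ℕ} (hx : x ∈ Npos s) (hy : y ∈ Epos s) :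
    x ≠ y := by
  rintro rfl
  simpa using (mem_Npos.1 hx).2.symm.trans (mem_Epos.1 hy).2

theorem getD_mem_Npos (hn : s.count true = n) (j : Fin n) : (Npos s).getD j 0 ∈ Npos s :=
  List.getD_mem_of_lt 0 (by rw [length_Npos hn]; exact j.isLt)

theorem IsDyckWord.getD_mem_Epos (hs : IsDyckWord s) (hn : s.count true = n) (i : Fin n) :
    (Epos s).getD i 0 ∈ Epos s :=
  List.getD_mem_of_lt 0 (by rw [hs.length_Epos hn]; exact i.isLt)

theorem IsDyckWord.Npos_getD_lt_Epos_getD (hs : IsDyckWord s) {k : ℕ}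
    (hk : k < (Epos s).length) : (Npos s).getD k 0 < (Epos s).getD k 0 := by
  set m := (Epos s).getD k 0 + 1
  have hprefix := hs.2 m
  rw [← length_positions, ← length_positions, positions_take, positions_take,
    ← Npos_eq_positions, ← Epos_eq_positions] at hprefix
  have hE : k < ((Epos s).filter (· < m)).length :=
    (sortedLT_Epos.lt_length_filter_lt_iff hk).2 (Nat.lt_succ_self _)
  have hkN : k < (Npos s).length := (hE.trans_le hprefix).trans_le (List.length_filter_le _ _)
  have hN := (sortedLT_Npos.lt_length_filter_lt_iff hkN).1 (hE.trans_le hprefix)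
  have := ne_of_mem_Npos_of_mem_Epos (List.getD_mem_of_lt 0 hkN) (List.getD_mem_of_lt 0 hk)
  omega

end Dyck

section Corners

variable {s : List Bool} {n : ℕ}

theorem mem_area_iff {p : Fin n × Fin n} :
    p ∈ area s n ↔ (p.1 : ℕ) < p.2 ∧ (Npos s).getD p.2 0 < (Epos s).getD p.1 0 := by
  simp [area]

theorem disjoint_area_corners : Disjoint (area s n) (corners s n) :=
  Finset.disjoint_left.2 fun _ ha hc => (Finset.mem_filter.1 hc).2.1 (mem_area_iff.1 ha).2

theorem IsDyckWord.corner_valley (hs : IsDyckWord s) (hn : s.count true = n)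
    {p : Fin n × Fin n} (hp : p ∈ corners s n) :
    (p.1 : ℕ) < p.2 ∧ (Npos s).getD p.2 0 = (Epos s).getD p.1 0 + 1 := by
  obtain ⟨hnot, hprev, hnext⟩ := (Finset.mem_filter.1 hp).2
  obtain ⟨⟨i, hi⟩, ⟨j, hj⟩⟩ := p
  simp only at hnot hprev hnext ⊢
  have hlenN := length_Npos hn
  have hlenE := hs.length_Epos hn
  have hlt : (Epos s).getD i 0 < (Npos s).getD j 0 := by
    have : (Npos s).getD j 0 ≠ (Epos s).getD i 0 :=
      ne_of_mem_Npos_of_mem_Epos (getD_mem_Npos hn ⟨j, hj⟩) (hs.getD_mem_Epos hn ⟨i, hi⟩)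
    omega
  have hj0 : j - 1 + 1 = j := by
    rcases j with _ | j
    · exact absurd hprev (by simpa using hlt.le)
    · rfl
  have hi1 : i + 1 < n := by
    by_contra h
    rw [List.getD_eq_default (Epos s) 0 (by omega : (Epos s).length ≤ i + 1)] at hnext
    omega
  have hvalley : (Npos s).getD j 0 = (Epos s).getD i 0 + 1 := by
    by_contra hne
    set x := (Epos s).getD i 0 + 1
    have hx : x < s.length :=
      lt_trans (by omega : x < (Npos s).getD j 0) (mem_Npos.1 (getD_mem_Npos hn ⟨j, hj⟩)).1
    cases hb : s.getD x false
    · exact sortedLT_Epos.notMem_of_getD_lt_of_lt_getD (hlenE ▸ hi1) (Nat.lt_succ_self _)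
        (by omega) (mem_positions.2 ⟨hx, hb⟩)
    · exact sortedLT_Npos.notMem_of_getD_lt_of_lt_getD (k := j - 1) (by omega)
        (by omega) (by rw [hj0]; omega) (mem_positions.2 ⟨hx, hb⟩)
  refine ⟨?_, hvalley⟩
  rw [← (sortedLT_Npos (s := s)).getD_lt_getD_iff (by omega) (by omega)]
  have := hs.Npos_getD_lt_Epos_getD (by omega : i < (Epos s).length)
  omega

end Corners

section ValleySwap

variable {V : Finset ℕ} {x y p L : ℕ}

/-- For `V` with no two adjacent elements, the product of the transpositions `(e e+1)`, `e ∈ V`: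
flipping the valleys at `V` permutes the letters of a word by it. -/
def valleySwap (V : Finset ℕ) (p : ℕ) : ℕ :=
  if p ∈ V then p + 1 else if 0 < p ∧ p - 1 ∈ V then p - 1 else p

theorem valleySwap_involutive (hV : ∀ e ∈ V, e + 1 ∉ V) :
    Function.Involutive (valleySwap V) := by
  intro p
  unfold valleySwap
  grind

theorem valleySwap_lt_valleySwap_iff (hV : ∀ e ∈ V, e + 1 ∉ V) :
    valleySwap V x < valleySwap V y ↔
      (x < y ∧ ¬ (x ∈ V ∧ y = x + 1)) ∨ (y ∈ V ∧ x = y + 1) := by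
  unfold valleySwap
  grind

theorem valleySwap_lt_iff (hL : ∀ e ∈ V, e + 1 < L) : valleySwap V p < L ↔ p < L := by
  unfold valleySwap
  grind

end ValleySwap

def flipAt (t : List Bool) (e : ℕ) : List Bool := (t.set e true).set (e + 1) false

def IsValleySet (s : List Bool) (V : Finset ℕ) : Prop :=
  ∀ e ∈ V, e + 1 < s.length ∧ s.getD e false = false ∧ s.getD (e + 1) false = true

section Flip

variable {s t : List Bool} {V : Finset ℕ} {p : ℕ}

theorem length_foldl_flipAt (es : List ℕ) (t : List Bool) :
    (es.foldl flipAt t).length = t.length := by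
  induction es generalizing t with
  | nil => rfl
  | cons e es ih => simp [ih, flipAt]

theorem getD_flipAt (e : ℕ) : (flipAt t e).getD p false =
    if p = e + 1 ∧ p < t.length then false else if p = e ∧ p < t.length then true
    else t.getD p false := by
  simp only [flipAt, List.getD_eq_getElem?_getD, List.getElem?_set, List.length_set]
  grind

theorem getD_foldl_flipAt (es : List ℕ) (t : List Bool) (hlen : ∀ e ∈ es, e + 1 < t.length)
    (hes : ∀ e ∈ es, e + 1 ∉ es) :
    (es.foldl flipAt t).getD p false =
      if p ∈ es then true else if 0 < p ∧ p - 1 ∈ es then false else t.getD p false := by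
  induction es generalizing t with
  | nil => simp
  | cons e es ih =>
    rw [List.foldl_cons, ih (flipAt t e) (by simp [flipAt]; grind) (by grind), getD_flipAt]
    grind

theorem IsValleySet.succ_notMem (hV : IsValleySet s V) : ∀ e ∈ V, e + 1 ∉ V := by
  intro e he he'
  have h := (hV e he).2.2
  rw [(hV (e + 1) he').2.1] at h
  exact Bool.false_ne_true h

theorem IsValleySet.positions_foldl_flipAt (hV : IsValleySet s V) {es : List ℕ}
    (hes : es.toFinset = V) (b : Bool) :
    positions (es.foldl flipAt s) b = (positions s b).map (valleySwap V) := by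
  have hmem : ∀ e, e ∈ es ↔ e ∈ V := fun e => by rw [← hes, List.mem_toFinset]
  apply positions_eq_map_of_getD_eq _ (valleySwap_involutive hV.succ_notMem)
  · intro p
    rw [length_foldl_flipAt, valleySwap_lt_iff fun e he => (hV e he).1]
  · intro p
    rw [getD_foldl_flipAt es s (fun e he => (hV e ((hmem e).1 he)).1)
      (fun e he => by simpa [hmem] using hV.succ_notMem e ((hmem e).1 he))]
    simp only [hmem, valleySwap]
    grind [IsValleySet]
  · intro x hx y hy hxy
    rw [valleySwap_lt_valleySwap_iff hV.succ_notMem]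
    refine Or.inl ⟨hxy, fun ⟨hxV, hyx⟩ => ?_⟩
    have := (mem_positions.1 hx).2.trans (mem_positions.1 hy).2.symm
    rw [hyx, (hV x hxV).2.1, (hV x hxV).2.2] at this
    exact Bool.false_ne_true this

end Flip

def cornerValleys {n : ℕ} (s : List Bool) (S : Finset (Fin n × Fin n)) : Finset ℕ :=
  S.image fun p => (Epos s).getD p.1 0

section FlipSet

variable {s : List Bool} {n : ℕ} {S : Finset (Fin n × Fin n)}

theorem flipSet_eq_foldl_flipAt :
    flipSet s S = (S.toList.map fun p => (Epos s).getD p.1 0).foldl flipAt s := by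
  rw [flipSet, List.foldl_map]
  rfl

theorem IsDyckWord.isValleySet_cornerValleys (hs : IsDyckWord s) (hn : s.count true = n)
    (hS : S ⊆ corners s n) : IsValleySet s (cornerValleys s S) := by
  simp only [IsValleySet, cornerValleys, Finset.mem_image]
  rintro _ ⟨p, hp, rfl⟩
  rw [← (hs.corner_valley hn (hS hp)).2]
  have hN := mem_Npos.1 (getD_mem_Npos hn p.2)
  have hE := mem_Epos.1 (hs.getD_mem_Epos hn p.1)
  exact ⟨hN.1, hE.2, hN.2⟩

theorem IsDyckWord.getD_positions_flipSet (hs : IsDyckWord s) (hn : s.count true = n)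
    (hS : S ⊆ corners s n) (b : Bool) {k : ℕ} (hk : k < (positions s b).length) :
    (positions (flipSet s S) b).getD k 0 =
      valleySwap (cornerValleys s S) ((positions s b).getD k 0) := by
  rw [flipSet_eq_foldl_flipAt, (hs.isValleySet_cornerValleys hn hS).positions_foldl_flipAt
    (by ext; simp [cornerValleys]) b, List.getD_eq_getElem _ _ (by simpa using hk),
    List.getElem_map, List.getD_eq_getElem _ _ hk]

theorem IsDyckWord.getD_Npos_flipSet (hs : IsDyckWord s) (hn : s.count true = n)
    (hS : S ⊆ corners s n) (j : Fin n) :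
    (Npos (flipSet s S)).getD j 0 =
      valleySwap (cornerValleys s S) ((Npos s).getD j 0) :=
  hs.getD_positions_flipSet hn hS true (by rw [← Npos_eq_positions, length_Npos hn]; exact j.isLt)

theorem IsDyckWord.getD_Epos_flipSet (hs : IsDyckWord s) (hn : s.count true = n)
    (hS : S ⊆ corners s n) (i : Fin n) :
    (Epos (flipSet s S)).getD i 0 =
      valleySwap (cornerValleys s S) ((Epos s).getD i 0) :=
  hs.getD_positions_flipSet hn hS false
    (by rw [← Epos_eq_positions, hs.length_Epos hn]; exact i.isLt)

theorem IsDyckWord.mem_iff_of_subset_corners (hs : IsDyckWord s) (hn : s.count true = n)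
    (hS : S ⊆ corners s n) {p : Fin n × Fin n} :
    p ∈ S ↔ (Epos s).getD p.1 0 ∈ cornerValleys s S ∧
      (Npos s).getD p.2 0 = (Epos s).getD p.1 0 + 1 := by
  refine ⟨fun hp => ⟨Finset.mem_image_of_mem _ hp, (hs.corner_valley hn (hS hp)).2⟩, ?_⟩
  rintro ⟨hE, hN⟩
  obtain ⟨p', hp', hEq⟩ := Finset.mem_image.1 hE
  have hlenN := length_Npos hn
  have hlenE := hs.length_Epos hn
  have h1 : p'.1 = p.1 := Fin.ext <|
    ((sortedLT_Epos (s := s)).getD_inj (by omega) (by omega)).1 hEq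
  have h2 : p'.2 = p.2 := Fin.ext <|
    ((sortedLT_Npos (s := s)).getD_inj (by omega) (by omega)).1 <| by
      rw [(hs.corner_valley hn (hS hp')).2, hN, hEq]
  rwa [← Prod.ext h1 h2]

theorem IsDyckWord.area_flipSet (hs : IsDyckWord s) (hn : s.count true = n)
    (hS : S ⊆ corners s n) : area (flipSet s S) n = area s n ∪ S := by
  have hV := hs.isValleySet_cornerValleys hn hS
  ext p
  have hNV : (Npos s).getD p.2 0 ∉ cornerValleys s S := fun h => by
    have := (hV _ h).2.1
    rw [(mem_Npos.1 (getD_mem_Npos hn p.2)).2] at this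
    simp at this
  rw [mem_area_iff, Finset.mem_union, mem_area_iff, hs.getD_Npos_flipSet hn hS,
    hs.getD_Epos_flipSet hn hS, valleySwap_lt_valleySwap_iff hV.succ_notMem,
    hs.mem_iff_of_subset_corners hn hS]
  have hlt : (Epos s).getD p.1 0 ∈ cornerValleys s S ∧
      (Npos s).getD p.2 0 = (Epos s).getD p.1 0 + 1 → (p.1 : ℕ) < p.2 :=
    fun h => (hs.corner_valley hn (hS ((hs.mem_iff_of_subset_corners hn hS).2 h))).1
  tauto

end FlipSet

section InclusionExclusion

open Finset

variable {ι : Type*}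

theorem sum_powerset_neg_one_pow_mul_pow_card_filter {R : Type*} [CommRing R] (C : Finset ι)
    (P : ι → Prop) [DecidablePred P] (x : R) :
    ∑ S ∈ C.powerset, (-1) ^ S.card * x ^ (S.filter P).card =
      (1 - x) ^ C.card * 0 ^ (C.filter (¬ P ·)).card := by
  have hterm : ∀ S : Finset ι, (-1) ^ S.card * x ^ (S.filter P).card =
      ∏ i ∈ S, -(if P i then x else 1) := by
    intro S
    simp [prod_neg, prod_ite]
  have hfactor : ∀ i, 1 + -(if P i then x else 1) = if P i then 1 - x else 0 := by
    intro i; split_ifs <;> ring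
  rw [sum_congr rfl fun S _ => hterm S, ← prod_one_add, prod_congr rfl fun i _ => hfactor i,
    prod_ite, prod_const, prod_const]
  obtain h | h := Nat.eq_zero_or_pos (C.filter (¬ P ·)).card
  · rw [h, ← card_filter_add_card_filter_not (s := C) P, h, add_zero]
  · rw [zero_pow h.ne', mul_zero, mul_zero]

theorem pow_card_filter_mul_zero_pow_eq [DecidableEq ι] {F : Type*} [Field F] {A C : Finset ι}
    (hAC : Disjoint A C) (P : ι → Prop) [DecidablePred P] {x : F} (hx : x ≠ 1) :
    x ^ (A.filter P).card * 0 ^ (C.filter (¬ P ·)).card =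
      (1 - x) ^ (-(C.card : ℤ)) *
        ∑ S ∈ C.powerset, (-1) ^ S.card * x ^ ((A ∪ S).filter P).card := by
  have hsplit : ∀ S ∈ C.powerset,
      x ^ ((A ∪ S).filter P).card = x ^ (A.filter P).card * x ^ (S.filter P).card := by
    intro S hS
    have hAS : Disjoint A S := hAC.mono_right (mem_powerset.1 hS)
    rw [filter_union, card_union_of_disjoint (disjoint_filter_filter hAS), pow_add]
  rw [sum_congr rfl fun S hS => by rw [hsplit S hS, mul_left_comm], ← mul_sum,
    sum_powerset_neg_one_pow_mul_pow_card_filter, zpow_neg, zpow_natCast]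
  field_simp [sub_ne_zero.2 hx.symm]

end InclusionExclusion

theorem q_ne_one : q ≠ 1 := fun h => by
  simpa [q] using congrArg RatFunc.intDegree h

theorem chiwt_zero_inclusion_exclusion (s : List Bool) (n : ℕ)
    (hs : IsDyckWord s) (hn : s.count true = n) :
    chiwt (area s n) (corners s n) 0 =
      MvPowerSeries.C (σ := ℕ+) (R := K) ((1 - q) ^ (-((corners s n).card : ℤ))) *
        ∑ S ∈ (corners s n).powerset,
          MvPowerSeries.C (σ := ℕ+) (R := K) ((-1) ^ S.card) * chi (area (flipSet s S) n) := by
  ext d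
  rw [MvPowerSeries.coeff_C_mul, map_sum,
    Finset.sum_congr rfl fun S hS => by
      rw [MvPowerSeries.coeff_C_mul, hs.area_flipSet hn (Finset.mem_powerset.1 hS)]]
  simp only [MvPowerSeries.coeff_apply, chi, chiwt, Finset.mul_sum]
  rw [Finset.sum_comm]
  refine Finset.sum_congr rfl fun w _ => ?_
  rw [← Finset.mul_sum]
  split_ifs
  · simp only [Pi.zero_apply, Finset.prod_const]
    have := pow_card_filter_mul_zero_pow_eq (disjoint_area_corners (s := s))
      (fun p => (w p.1 : ℕ+) > w p.2) q_ne_one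
    simpa only [not_lt, gt_iff_lt] using this
  · simp

end
end
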